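/- For every q ∈ ℚ∞ and every x in the quaternion group H, the vector v_q^x satisfies deg(v_q^x) = ⟨h₀, v_q^x⟩ = a(q) and rk(v_q^x) = ⟨v_q^x, h_∞⟩ = b(q); consequently ⟨v_q^x, h_q⟩ = 0 and ⟨h_q, v_q^x⟩ = 0. -/

import Mathlib

open Matrix

abbrev V6 := Fin 6 → ℤ

def C6 : Matrix (Fin 6) (Fin 6) ℤ :=
  !![1,0,-1,-1,1,1;
     0,1,-1,-1,1,1;
     0,0,1,0,-1,-1;
     0,0,0,1,-1,-1;
     0,0,0,0,1,0;
     0,0,0,0,0,1]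

/-- The bilinear form `⟨x,y⟩ = xᵀ C y` on `ℤ^6`. -/
def form (x y : V6) : ℤ := x ⬝ᵥ C6.mulVec y

/-- The quaternion `i`. -/
def qI : Quaternion ℤ := ⟨0,1,0,0⟩
/-- The quaternion `j`. -/
def qJ : Quaternion ℤ := ⟨0,0,1,0⟩
/-- The quaternion `k`. -/
def qK : Quaternion ℤ := ⟨0,0,0,1⟩

instance : DecidableEq (Quaternion ℤ) := fun x y =>
  decidable_of_iff (x.re = y.re ∧ x.imI = y.imI ∧ x.imJ = y.imJ ∧ x.imK = y.imK)
    ⟨fun ⟨h1, h2, h3, h4⟩ => QuaternionAlgebra.ext h1 h2 h3 h4,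
     fun h => by subst h; exact ⟨rfl, rfl, rfl, rfl⟩⟩

/-- The quaternion group `H = {±1, ±i, ±j, ±k}`. -/
def Hset : Finset (Quaternion ℤ) := {1, -1, qI, -qI, qJ, -qJ, qK, -qK}

/-- The subset `H⁺ = {1, i, j, k}`. -/
def Hplus : Finset (Quaternion ℤ) := {1, qI, qJ, qK}

/-- Index type for the three special slopes `0`, `1`, `∞`. -/
inductive Ty | zero | one | inf
deriving DecidableEq

def h0 : V6 := ![0,0,1,1,1,1]
def h1 : V6 := ![1,1,2,2,1,1]
def hinf : V6 := ![1,1,1,1,0,0]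

def hTy : Ty → V6
  | .zero => h0
  | .one => h1
  | .inf => hinf

/-- The vectors `v_t^x` for `t ∈ {0,1,∞}` and `x ∈ H⁺`. -/
def vposTy : Ty → Quaternion ℤ → V6
  | .zero, x => if x = 1 then ![0,0,1,0,1,0] else if x = qI then ![-1,0,0,0,0,0]
      else if x = qJ then ![0,0,1,0,0,1] else ![0,1,1,1,1,1]
  | .one, x => if x = 1 then ![1,0,1,1,1,0] else if x = qI then ![0,1,1,1,1,0]
      else if x = qJ then ![0,0,1,0,0,0] else ![1,1,2,1,1,1]
  | .inf, x => if x = 1 then ![1,0,0,1,0,0] else if x = qI then ![1,1,1,1,1,0]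
      else if x = qJ then ![0,0,0,0,0,-1] else ![1,0,1,0,0,0]

/-- The vectors `v_t^x` for `t ∈ {0,1,∞}` and `x ∈ H`, with `v_t^{-x} = h_t - v_t^x`. -/
def vTy (t : Ty) (x : Quaternion ℤ) : V6 :=
  if x ∈ Hplus then vposTy t x else hTy t - vposTy t (-x)

/-- `a(q)`: numerator, with `a(∞) = 1`. -/
def aQ : WithTop ℚ → ℤ := WithTop.recTopCoe 1 Rat.num

/-- `b(q)`: denominator, with `b(∞) = 0`. -/
def bQ : WithTop ℚ → ℤ := WithTop.recTopCoe 0 (fun x => (x.den : ℤ))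

/-- The type `t(q) ∈ {0,1,∞}` of a slope `q`. -/
def tyQ (q : WithTop ℚ) : Ty :=
  if aQ q % 2 = 0 then Ty.zero else if bQ q % 2 = 1 then Ty.one else Ty.inf

/-- `⌊n⌋₂ = n/2` for even `n` and `(n-1)/2` for odd `n`. -/
def half2 (n : ℤ) : ℤ := if Even n then n / 2 else (n - 1) / 2

/-- `h_q = b(q)·h₀ + a(q)·h_∞`. -/
def hQ (q : WithTop ℚ) : V6 := bQ q • h0 + aQ q • hinf

/-- `v_q^x = v_{t(q)}^x + ⌊b(q)⌋₂·h₀ + ⌊a(q)⌋₂·h_∞`. -/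
def vQ (q : WithTop ℚ) (x : Quaternion ℤ) : V6 :=
  vTy (tyQ q) x + half2 (bQ q) • h0 + half2 (aQ q) • hinf

/-- `rk e = ⟨e, h_∞⟩`. -/
def rk (e : V6) : ℤ := form e hinf

/-- `deg e = ⟨h₀, e⟩`. -/
def degV (e : V6) : ℤ := form h0 e

/-- `e` is positive if `rk e > 0`, or `rk e = 0` and `deg e > 0`. -/
def PosV (e : V6) : Prop := 0 < rk e ∨ (rk e = 0 ∧ 0 < degV e)

/-- `d(p,q) = |a(q)b(p) - a(p)b(q)|`. -/
def dQ (p q : WithTop ℚ) : ℤ := |aQ q * bQ p - aQ p * bQ q|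

/-- Complexity `c(p) = |a(p)| + |b(p)| + |a(p)+b(p)|`. -/
def cpx (p : WithTop ℚ) : ℤ := |aQ p| + |bQ p| + |aQ p + bQ p|


/-!
Both `h₀` and `h_∞` lie in the radical of the symmetrised form `C + Cᵀ`, so
`⟨e, h_q⟩ = -⟨h_q, e⟩ = a(q)·rk e - b(q)·deg e`, and the last two claims follow from the first two.
Since `deg h₀ = rk h_∞ = 0` and `deg h_∞ = rk h₀ = 2`, the first two reduce to
`deg v_t^x = a(t)`, `rk v_t^x = b(t)` for the slopes `t ∈ {0, 1, ∞}` (the case `-x` follows from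
`deg h_t = 2a(t)`, `rk h_t = 2b(t)`), together with `a(q) ≡ a(t(q))`, `b(q) ≡ b(t(q))` mod 2,
which holds because `a(q)` and `b(q)` are coprime.
-/

namespace Ty

-- `num t / den t` is the reduced fraction `a(t)/b(t)` of the slope `t`.
def num : Ty → ℤ
  | .zero => 0 | .one => 1 | .inf => 1

def den : Ty → ℤ
  | .zero => 1 | .one => 1 | .inf => 0

end Ty

section Bilinear

variable (a : ℤ) (u v w : V6)

lemma form_add_left : form (u + v) w = form u w + form v w := by
  simp only [form, add_dotProduct]

lemma form_smul_left : form (a • u) w = a * form u w := by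
  rw [form, form, smul_dotProduct, smul_eq_mul]

lemma form_add_right : form u (v + w) = form u v + form u w := by
  simp only [form, mulVec_add, dotProduct_add]

lemma form_smul_right : form u (a • w) = a * form u w := by
  rw [form, form, mulVec_smul, dotProduct_smul, smul_eq_mul]

lemma degV_add : degV (u + v) = degV u + degV v := form_add_right h0 u v

lemma degV_sub : degV (u - v) = degV u - degV v := by
  simp only [degV, form, mulVec_sub, dotProduct_sub]

lemma degV_smul : degV (a • u) = a * degV u := form_smul_right a h0 u

lemma rk_add : rk (u + v) = rk u + rk v := form_add_left u v hinf

lemma rk_sub : rk (u - v) = rk u - rk v := by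
  simp only [rk, form, sub_dotProduct]

lemma rk_smul : rk (a • u) = a * rk u := form_smul_left a u hinf

end Bilinear

lemma form_eq_neg_form_of_mulVec_eq_neg {h : V6} (hh : C6 *ᵥ h = -(h ᵥ* C6)) (e : V6) :
    form e h = -form h e := by
  rw [form, form, hh, dotProduct_neg, dotProduct_mulVec h, dotProduct_comm]

lemma form_h0_eq_neg (e : V6) : form e h0 = -form h0 e :=
  form_eq_neg_form_of_mulVec_eq_neg (by decide) e

lemma form_hinf_eq_neg (e : V6) : form e hinf = -form hinf e :=
  form_eq_neg_form_of_mulVec_eq_neg (by decide) e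

lemma form_hQ_left (q : WithTop ℚ) (e : V6) : form (hQ q) e = -form e (hQ q) := by
  simp only [hQ, form_add_left, form_add_right, form_smul_left, form_smul_right,
    form_h0_eq_neg e, form_hinf_eq_neg e]
  ring

lemma form_hQ_right (q : WithTop ℚ) (e : V6) :
    form e (hQ q) = aQ q * rk e - bQ q * degV e := by
  simp only [hQ, rk, degV, form_add_right, form_smul_right, form_h0_eq_neg e]
  ring

lemma degV_h0 : degV h0 = 0 := by decide
lemma degV_hinf : degV hinf = 2 := by decide
lemma rk_h0 : rk h0 = 2 := by decide
lemma rk_hinf : rk hinf = 0 := by decide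

lemma degV_hTy (t : Ty) : degV (hTy t) = 2 * t.num := by
  cases t <;> decide

lemma rk_hTy (t : Ty) : rk (hTy t) = 2 * t.den := by
  cases t <;> decide

lemma degV_vposTy (t : Ty) (y : Quaternion ℤ) : degV (vposTy t y) = t.num := by
  cases t <;> simp only [vposTy] <;> split_ifs <;> decide

lemma rk_vposTy (t : Ty) (y : Quaternion ℤ) : rk (vposTy t y) = t.den := by
  cases t <;> simp only [vposTy] <;> split_ifs <;> decide

lemma degV_vTy (t : Ty) (x : Quaternion ℤ) : degV (vTy t x) = t.num := by
  unfold vTy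
  split_ifs
  · exact degV_vposTy t x
  · rw [degV_sub, degV_hTy, degV_vposTy]
    ring

lemma rk_vTy (t : Ty) (x : Quaternion ℤ) : rk (vTy t x) = t.den := by
  unfold vTy
  split_ifs
  · exact rk_vposTy t x
  · rw [rk_sub, rk_hTy, rk_vposTy]
    ring

lemma degV_vQ (q : WithTop ℚ) (x : Quaternion ℤ) :
    degV (vQ q x) = (tyQ q).num + 2 * half2 (aQ q) := by
  simp only [vQ, degV_add, degV_smul, degV_vTy, degV_h0, degV_hinf]
  ring

lemma rk_vQ (q : WithTop ℚ) (x : Quaternion ℤ) :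
    rk (vQ q x) = (tyQ q).den + 2 * half2 (bQ q) := by
  simp only [vQ, rk_add, rk_smul, rk_vTy, rk_h0, rk_hinf]
  ring

lemma two_mul_half2_add_emod (n : ℤ) : 2 * half2 n + n % 2 = n := by
  unfold half2
  split_ifs with h
  · rw [Int.even_iff] at h; omega
  · rw [Int.not_even_iff] at h; omega

lemma not_two_dvd_aQ_and_bQ (q : WithTop ℚ) : ¬(2 ∣ aQ q ∧ 2 ∣ bQ q) := by
  induction q using WithTop.recTopCoe with
  | top => simp [aQ]
  | coe r =>
    rintro ⟨ha, hb⟩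
    have h2 : (2 : ℕ) ∣ 1 :=
      r.reduced ▸ Nat.dvd_gcd (Int.ofNat_dvd_left.mp ha) (Int.ofNat_dvd.mp hb)
    omega

lemma Ty.num_tyQ (q : WithTop ℚ) : (tyQ q).num = aQ q % 2 := by
  unfold tyQ
  split_ifs <;> simp only [Ty.num] <;> omega

lemma Ty.den_tyQ (q : WithTop ℚ) : (tyQ q).den = bQ q % 2 := by
  have := not_two_dvd_aQ_and_bQ q
  unfold tyQ
  split_ifs <;> simp only [Ty.den] <;> omega

theorem stmt3_general (q : WithTop ℚ) (x : Quaternion ℤ) :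
    degV (vQ q x) = aQ q ∧ rk (vQ q x) = bQ q ∧
    form (vQ q x) (hQ q) = 0 ∧ form (hQ q) (vQ q x) = 0 := by
  have hdeg : degV (vQ q x) = aQ q := by
    rw [degV_vQ, Ty.num_tyQ]
    linarith [two_mul_half2_add_emod (aQ q)]
  have hrk : rk (vQ q x) = bQ q := by
    rw [rk_vQ, Ty.den_tyQ]
    linarith [two_mul_half2_add_emod (bQ q)]
  have hright : form (vQ q x) (hQ q) = 0 := by
    rw [form_hQ_right, hdeg, hrk]
    ring
  exact ⟨hdeg, hrk, hright, by rw [form_hQ_left, hright, neg_zero]⟩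

theorem stmt3 (q : WithTop ℚ) (x : Quaternion ℤ) (hx : x ∈ Hset) :
    degV (vQ q x) = aQ q ∧ rk (vQ q x) = bQ q ∧
    form (vQ q x) (hQ q) = 0 ∧ form (hQ q) (vQ q x) = 0 :=
  stmt3_general q x
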